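/- arXiv:2009.07116 — 2 statements merged into one kernel-verified Lean document; each statement's English description precedes it below -/
import Mathlib

section
/- For every Q ∈ S ⊗ R the following are equivalent: (i) β(Q, Q) = 0; (ii) there exists an ω-isotropic subspace U ⊆ R such that Q lies in S ⊗ U; (iii) the range of the linear map q_Q : Dual(S) → R determined by Q via contraction (q_Q(α) = (α ⊗ id)(Q)) is an ω-isotropic subspace of R. (This is the basic characterization of square-zero supercharges underlying the classification of twists in §3.1.1 of the paper.) -/
/-! Pairing `β Q Q` against `α ∧ α' ∈ ⋀²(Dual S)` gives
`ω (q_Q α) (q_Q α') - ω (q_Q α') (q_Q α) = 2 ω (q_Q α) (q_Q α')` since `ω` is alternating, so a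
square-zero `Q` has isotropic `range q_Q`. Expanding `Q = ∑ bᵢ ⊗ q_Q (bᵢ*)` in a basis of `S`
shows `Q ∈ S ⊗ range q_Q`, and `β` vanishes on all of `S ⊗ U` for isotropic `U`, which closes
the cycle (i) → (iii) → (ii) → (i). -/

open TensorProduct ExteriorAlgebra

/-- The wedge `s ∧ t` as an element of the second exterior power `⋀[ℂ]^2 S`. -/
noncomputable def wedge {S : Type} [AddCommGroup S] [Module ℂ S] (s t : S) : ⋀[ℂ]^2 S :=
  ⟨ι ℂ s * ι ℂ t, by
    show _ ∈ LinearMap.range (ι ℂ : S →ₗ[ℂ] ExteriorAlgebra ℂ S) ^ 2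
    rw [pow_two]
    exact Submodule.mul_mem_mul (LinearMap.mem_range_self _ s) (LinearMap.mem_range_self _ t)⟩

section Contraction

variable {K S R : Type*} [CommRing K] [AddCommGroup S] [Module K S] [AddCommGroup R] [Module K R]

/-- The paper's `q_Q` is `contractionMap Q`. -/
noncomputable def contractionMap : S ⊗[K] R →ₗ[K] Module.Dual K S →ₗ[K] R :=
  (LinearMap.mk₂ K (fun α Q => TensorProduct.lid K R (TensorProduct.map α LinearMap.id Q))
    (by simp [TensorProduct.map_add_left]) (by simp [TensorProduct.map_smul_left])
    (by simp) (by simp)).flip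

@[simp]
lemma contractionMap_tmul (s : S) (r : R) (α : Module.Dual K S) :
    contractionMap (s ⊗ₜ[K] r) α = α s • r := by
  simp [contractionMap]

end Contraction

lemma mem_range_map_subtype_of_range_contractionMap_le {K S R : Type*} [Field K]
    [AddCommGroup S] [Module K S] [AddCommGroup R] [Module K R] {Q : S ⊗[K] R}
    {U : Submodule K R} (hQ : LinearMap.range (contractionMap Q) ≤ U) :
    Q ∈ LinearMap.range (TensorProduct.map LinearMap.id U.subtype) := by
  classical
  let b := Module.Free.chooseBasis K S
  have hcoeff (i) : TensorProduct.equivFinsuppOfBasisLeft b Q i ∈ U := by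
    rw [TensorProduct.equivFinsuppOfBasisLeft_apply]
    exact hQ ⟨b.coord i, rfl⟩
  rw [← (TensorProduct.equivFinsuppOfBasisLeft b).symm_apply_apply Q,
    TensorProduct.equivFinsuppOfBasisLeft_symm_apply]
  refine Submodule.finsuppSum_mem _ _ _ _ fun i _ => ⟨b i ⊗ₜ ⟨_, hcoeff i⟩, ?_⟩
  simp

lemma bilin_map_subtype_eq_zero_of_isotropic {K S R W : Type*} [CommRing K] [AddCommGroup S]
    [Module K S] [AddCommGroup R] [Module K R] [AddCommGroup W] [Module K W]
    {ω : R →ₗ[K] R →ₗ[K] K} {β : (S ⊗[K] R) →ₗ[K] (S ⊗[K] R) →ₗ[K] W}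
    (hβ : ∀ (s s' : S) (r r' : R), ω r r' = 0 → β (s ⊗ₜ r) (s' ⊗ₜ r') = 0)
    {U : Submodule K R} (hU : ∀ u ∈ U, ∀ u' ∈ U, ω u u' = 0) (x y : S ⊗[K] U) :
    β (TensorProduct.map LinearMap.id U.subtype x)
      (TensorProduct.map LinearMap.id U.subtype y) = 0 := by
  induction x using TensorProduct.induction_on with
  | zero => simp
  | add => simp_all
  | tmul s u =>
    induction y using TensorProduct.induction_on with
    | zero => simp
    | add => simp_all
    | tmul s' u' => simpa using hβ s s' u u' (hU u u.2 u' u'.2)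

lemma wedge_eq_ιMulti {S : Type} [AddCommGroup S] [Module ℂ S] (s t : S) :
    wedge s t = exteriorPower.ιMulti ℂ 2 ![s, t] := by
  ext
  simp [wedge, ιMulti_apply]

lemma pairingDual_wedge {S : Type} [AddCommGroup S] [Module ℂ S] (α α' : Module.Dual ℂ S)
    (s t : S) :
    exteriorPower.pairingDual ℂ S 2 (exteriorPower.ιMulti ℂ 2 ![α, α']) (wedge s t) =
      α s * α' t - α' s * α t := by
  simp [wedge_eq_ιMulti, Matrix.det_fin_two]

section SquareZero

variable {S R : Type} [AddCommGroup S] [Module ℂ S] [AddCommGroup R] [Module ℂ R]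
  {ω : R →ₗ[ℂ] R →ₗ[ℂ] ℂ} {β : (S ⊗[ℂ] R) →ₗ[ℂ] (S ⊗[ℂ] R) →ₗ[ℂ] ⋀[ℂ]^2 S}

lemma pairingDual_bracket
    (hβ : ∀ (s s' : S) (r r' : R), β (s ⊗ₜ[ℂ] r) (s' ⊗ₜ[ℂ] r') = ω r r' • wedge s s')
    (α α' : Module.Dual ℂ S) (Q Q' : S ⊗[ℂ] R) :
    exteriorPower.pairingDual ℂ S 2 (exteriorPower.ιMulti ℂ 2 ![α, α']) (β Q Q') =
      ω (contractionMap Q α) (contractionMap Q' α') -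
        ω (contractionMap Q α') (contractionMap Q' α) := by
  induction Q using TensorProduct.induction_on with
  | zero => simp
  | add x y hx hy => simp only [map_add, LinearMap.add_apply, hx, hy]; ring
  | tmul s r =>
    induction Q' using TensorProduct.induction_on with
    | zero => simp
    | add x y hx hy => simp only [map_add, LinearMap.add_apply, hx, hy]; ring
    | tmul s' r' =>
      simp only [hβ, map_smul, LinearMap.smul_apply, pairingDual_wedge, contractionMap_tmul,
        smul_eq_mul]
      ring

lemma contractionMap_isotropic_of_bracket_self_eq_zero (hω : ω.IsAlt)
    (hβ : ∀ (s s' : S) (r r' : R), β (s ⊗ₜ[ℂ] r) (s' ⊗ₜ[ℂ] r') = ω r r' • wedge s s')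
    {Q : S ⊗[ℂ] R} (hQ : β Q Q = 0) (α α' : Module.Dual ℂ S) :
    ω (contractionMap Q α) (contractionMap Q α') = 0 := by
  have h := pairingDual_bracket hβ α α' Q Q
  rw [hQ, map_zero, ← hω.neg (contractionMap Q α), sub_neg_eq_add, eq_comm] at h
  exact add_self_eq_zero.mp h

end SquareZero

theorem square_zero_supercharge_characterization_general
    {S R : Type} [AddCommGroup S] [Module ℂ S]
    [AddCommGroup R] [Module ℂ R]
    (ω : R →ₗ[ℂ] R →ₗ[ℂ] ℂ)
    (halt : ∀ r : R, ω r r = 0)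
    (β : (S ⊗[ℂ] R) →ₗ[ℂ] (S ⊗[ℂ] R) →ₗ[ℂ] ⋀[ℂ]^2 S)
    (hβ : ∀ (s s' : S) (r r' : R),
      β (s ⊗ₜ[ℂ] r) (s' ⊗ₜ[ℂ] r') = ω r r' • wedge s s')
    (Q : S ⊗[ℂ] R) :
    (β Q Q = 0 ↔
      ∃ U : Submodule ℂ R, (∀ u ∈ U, ∀ u' ∈ U, ω u u' = 0) ∧
        Q ∈ LinearMap.range
          (TensorProduct.map (LinearMap.id : S →ₗ[ℂ] S) U.subtype)) ∧
    (β Q Q = 0 ↔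
      ∀ α α' : Module.Dual ℂ S,
        ω (TensorProduct.lid ℂ R (TensorProduct.map α (LinearMap.id : R →ₗ[ℂ] R) Q))
          (TensorProduct.lid ℂ R (TensorProduct.map α' (LinearMap.id : R →ₗ[ℂ] R) Q)) = 0) := by
  have i_iii : β Q Q = 0 → ∀ α α', ω (contractionMap Q α) (contractionMap Q α') = 0 :=
    contractionMap_isotropic_of_bracket_self_eq_zero halt hβ
  have iii_ii (h : ∀ α α', ω (contractionMap Q α) (contractionMap Q α') = 0) :
      ∃ U : Submodule ℂ R, (∀ u ∈ U, ∀ u' ∈ U, ω u u' = 0) ∧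
        Q ∈ LinearMap.range (TensorProduct.map (LinearMap.id : S →ₗ[ℂ] S) U.subtype) := by
    refine ⟨LinearMap.range (contractionMap Q), ?_,
      mem_range_map_subtype_of_range_contractionMap_le le_rfl⟩
    rintro _ ⟨α, rfl⟩ _ ⟨α', rfl⟩
    exact h α α'
  have ii_i : (∃ U : Submodule ℂ R, (∀ u ∈ U, ∀ u' ∈ U, ω u u' = 0) ∧
      Q ∈ LinearMap.range (TensorProduct.map (LinearMap.id : S →ₗ[ℂ] S) U.subtype)) →
      β Q Q = 0 := by
    rintro ⟨U, hU, Q', rfl⟩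
    exact bilin_map_subtype_eq_zero_of_isotropic
      (fun s s' r r' h => by rw [hβ, h, zero_smul]) hU Q' Q'
  exact ⟨⟨fun h => iii_ii (i_iii h), ii_i⟩, ⟨i_iii, fun h => ii_i (iii_ii h)⟩⟩

/-- For `Q ∈ S ⊗ R` the following are equivalent: (i) `β Q Q = 0`; (ii) `Q` lies in `S ⊗ U`
for some `ω`-isotropic subspace `U ⊆ R`; (iii) the range of the contraction map
`q_Q : Dual S → R`, `α ↦ (α ⊗ id) Q`, is an `ω`-isotropic subspace of `R`. -/
theorem square_zero_supercharge_characterization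
    {S R : Type} [AddCommGroup S] [Module ℂ S] [FiniteDimensional ℂ S]
    [AddCommGroup R] [Module ℂ R] [FiniteDimensional ℂ R]
    (ω : R →ₗ[ℂ] R →ₗ[ℂ] ℂ)
    (halt : ∀ r : R, ω r r = 0)
    (hnd : ∀ r : R, (∀ r' : R, ω r r' = 0) → r = 0)
    (β : (S ⊗[ℂ] R) →ₗ[ℂ] (S ⊗[ℂ] R) →ₗ[ℂ] ⋀[ℂ]^2 S)
    (hβ : ∀ (s s' : S) (r r' : R),
      β (s ⊗ₜ[ℂ] r) (s' ⊗ₜ[ℂ] r') = ω r r' • wedge s s')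
    (Q : S ⊗[ℂ] R) :
    (β Q Q = 0 ↔
      ∃ U : Submodule ℂ R, (∀ u ∈ U, ∀ u' ∈ U, ω u u' = 0) ∧
        Q ∈ LinearMap.range
          (TensorProduct.map (LinearMap.id : S →ₗ[ℂ] S) U.subtype)) ∧
    (β Q Q = 0 ↔
      ∀ α α' : Module.Dual ℂ S,
        ω (TensorProduct.lid ℂ R (TensorProduct.map α (LinearMap.id : R →ₗ[ℂ] R) Q))
          (TensorProduct.lid ℂ R (TensorProduct.map α' (LinearMap.id : R →ₗ[ℂ] R) Q)) = 0) :=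
  square_zero_supercharge_characterization_general ω halt β hβ Q
end

section
/- Suppose dim_ℂ S = 4. Let Q = s ⊗ r with s ≠ 0 and r ≠ 0 (a minimal, i.e. holomorphic, supercharge, which is automatically square-zero). Then the range of the linear map β(Q, −) : S ⊗ R → ⋀²S equals the range of the linear map S → ⋀²S, t ↦ s ∧ t, and this range has dimension 3. (This is the paper's claim that a minimal supercharge has exactly three invariant directions among the six complexified translations V ≅ ⋀²S₊, so that its twist is a holomorphic theory on complex three-folds.) -/
open TensorProduct ExteriorAlgebra

/-- For fixed `s`, the linear map `S → ⋀²S`, `t ↦ s ∧ t`. -/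
noncomputable def wedgeMap {S : Type} [AddCommGroup S] [Module ℂ S] (s : S) :
    S →ₗ[ℂ] ⋀[ℂ]^2 S where
  toFun t := wedge s t
  map_add' t t' := Subtype.ext <| by simp [wedge, mul_add]
  map_smul' a t := Subtype.ext <| by simp [wedge, mul_smul_comm]

lemma wedge_ne_zero_of_nmem {S : Type} [AddCommGroup S] [Module ℂ S]
    (s t : S) (hs : s ≠ 0) (ht : t ∉ Submodule.span ℂ {s}) :
    ι ℂ s * ι ℂ t ≠ 0 := by
  -- dual functionals
  obtain ⟨φ, hφt, hφs⟩ := (Submodule.span ℂ {s}).exists_dual_map_eq_bot_of_notMem ht inferInstance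
  have hs' : s ∉ Submodule.span ℂ {t} := by
    intro hmem
    obtain ⟨c, rfl⟩ := Submodule.mem_span_singleton.mp hmem
    have hc : c ≠ 0 := by rintro rfl; simp at hs
    exact ht (Submodule.mem_span_singleton.mpr ⟨c⁻¹, by simp [smul_smul, inv_mul_cancel₀ hc]⟩)
  obtain ⟨ψ, hψs, hψt⟩ := (Submodule.span ℂ {t}).exists_dual_map_eq_bot_of_notMem hs' inferInstance
  have hφs0 : φ s = 0 := by
    have := hφs ▸ Submodule.mem_map_of_mem (f := φ) (Submodule.mem_span_singleton_self s)
    simpa using this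
  have hψt0 : ψ t = 0 := by
    have := hψt ▸ Submodule.mem_map_of_mem (f := ψ) (Submodule.mem_span_singleton_self t)
    simpa using this
  set F : MultilinearMap ℂ (fun _ : Fin 2 => S) ℂ :=
    (MultilinearMap.mkPiAlgebraFin ℂ 2 ℂ).compLinearMap ![ψ, φ] with hF
  set A : S [⋀^Fin 2]→ₗ[ℂ] ℂ := MultilinearMap.alternatization F with hA
  have hAval : ∀ u v : S, A ![u, v] = ψ u * φ v - ψ v * φ u := by
    intro u v
    rw [hA, MultilinearMap.alternatization_apply]
    rw [show (Finset.univ : Finset (Equiv.Perm (Fin 2))) = {1, Equiv.swap 0 1} from by decide]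
    rw [Finset.sum_insert (by decide), Finset.sum_singleton]
    simp [hF, MultilinearMap.mkPiAlgebraFin_apply, Fin.prod_univ_two, sub_eq_add_neg]
  set f : ∀ i : ℕ, S [⋀^Fin i]→ₗ[ℂ] ℂ := fun i => match i with | 2 => A | _ => 0 with hf
  intro h
  have := congrArg (liftAlternating f) h
  rw [map_zero, liftAlternating_ι_mul, liftAlternating_ι] at this
  have h2 : A.curryLeft s ![t] = 0 := this
  rw [AlternatingMap.curryLeft_apply_apply] at h2
  have : A ![s, t] = 0 := by
    rw [show ![s, t] = Matrix.vecCons s ![t] from by ext i; fin_cases i <;> rfl]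
    exact h2
  rw [hAval, hφs0, hψt0] at this
  simp only [mul_zero, zero_mul, sub_zero] at this
  rcases mul_eq_zero.mp this with h' | h'
  · exact hψs h'
  · exact hφt h'

lemma wedgeMap_ker {S : Type} [AddCommGroup S] [Module ℂ S]
    (s : S) (hs : s ≠ 0) : LinearMap.ker (wedgeMap s) = Submodule.span ℂ {s} := by
  ext t
  simp only [LinearMap.mem_ker]
  constructor
  · intro h
    by_contra ht
    exact wedge_ne_zero_of_nmem s t hs ht (congrArg Subtype.val h)
  · intro h
    obtain ⟨c, rfl⟩ := Submodule.mem_span_singleton.mp h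
    apply Subtype.ext
    show ι ℂ s * ι ℂ (c • s) = 0
    rw [map_smul, mul_smul_comm, ι_sq_zero, smul_zero]

/-- Suppose `dim_ℂ S = 4`, and let `Q = s ⊗ r` be a minimal (holomorphic) supercharge with
`s ≠ 0`, `r ≠ 0`.  Then the range of `β (Q, -) : S ⊗ R → ⋀²S` equals the range of the map
`t ↦ s ∧ t`, and this range is 3-dimensional: a minimal supercharge has exactly three
invariant directions among the six complexified translations `V ≅ ⋀²S₊`. -/
theorem minimal_supercharge_image_is_three_dimensional
    {S R : Type} [AddCommGroup S] [Module ℂ S] [FiniteDimensional ℂ S]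
    [AddCommGroup R] [Module ℂ R] [FiniteDimensional ℂ R]
    (hS : Module.finrank ℂ S = 4)
    (ω : R →ₗ[ℂ] R →ₗ[ℂ] ℂ)
    (halt : ∀ r : R, ω r r = 0)
    (hnd : ∀ r : R, (∀ r' : R, ω r r' = 0) → r = 0)
    (β : (S ⊗[ℂ] R) →ₗ[ℂ] (S ⊗[ℂ] R) →ₗ[ℂ] ⋀[ℂ]^2 S)
    (hβ : ∀ (s s' : S) (r r' : R),
      β (s ⊗ₜ[ℂ] r) (s' ⊗ₜ[ℂ] r') = ω r r' • wedge s s')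
    (s : S) (r : R) (hs : s ≠ 0) (hr : r ≠ 0) :
    LinearMap.range (β (s ⊗ₜ[ℂ] r)) = LinearMap.range (wedgeMap s) ∧
    Module.finrank ℂ ↥(LinearMap.range (β (s ⊗ₜ[ℂ] r))) = 3 := by
  have hrange : LinearMap.range (β (s ⊗ₜ[ℂ] r)) = LinearMap.range (wedgeMap s) := by
    apply le_antisymm
    · rintro x ⟨y, rfl⟩
      induction y using TensorProduct.induction_on with
      | zero => simp
      | tmul s' r' =>
        rw [hβ]
        exact ⟨ω r r' • s', by simp [wedgeMap, wedge]⟩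
      | add a b ha hb =>
        rw [map_add]
        exact Submodule.add_mem _ ha hb
    · obtain ⟨r', hr'⟩ : ∃ r', ω r r' ≠ 0 := by
        by_contra h
        push_neg at h
        exact hr (hnd r h)
      rintro x ⟨t, rfl⟩
      refine ⟨(ω r r')⁻¹ • (t ⊗ₜ[ℂ] r'), ?_⟩
      rw [map_smul, hβ, smul_smul, inv_mul_cancel₀ hr', one_smul]
      rfl
  refine ⟨hrange, ?_⟩
  rw [hrange]
  have h1 := LinearMap.finrank_range_add_finrank_ker (wedgeMap s)
  rw [wedgeMap_ker s hs, finrank_span_singleton hs, hS] at h1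
  omega
end
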